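/- Let ψ ≥ 2, Ψ ≥ 1 and t be integers with 1 ≤ t ≤ ψ. For x ∈ {0, 1, …, ψ−1}, let B_x = { ((y + x) mod ψ)/Ψ : y ∈ {0, 1, …, t−1} } ⊂ ℝ, and for a finite set B ⊂ ℝ and k ∈ ℤ write S_B(k) = ∑_{b ∈ B} e^{−2πi b k}. Let A ⊂ (1/Ψ)·ℤ be a finite set with T = #A ≥ 1 and suppose 4·log(8Ψ) ≤ T. Then there exists a function x : A → {0, 1, …, ψ−1} such that for every k ∈ ℤ, | ∑_{a ∈ A} ( S_{B_{x(a)}}(k)/t − S_{P}(k)/ψ ) e^{−2πi a k} | ≤ 4·T^{1/2}·(log(8Ψ))^{1/2}, where P = {0, 1/Ψ, 2/Ψ, …, (ψ−1)/Ψ}. -/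

import Mathlib

/-!
Choose the shifts `x(a)` independently and uniformly at random. For fixed `k` the summands
`(S_{B_{x(a)}}(k)/t - S_P(k)/ψ) e^{-2πiak}` are independent, bounded by `2` and centred, because
averaging `S_{B_x}(k)` over all `ψ` shifts `x` gives `t S_P(k) / ψ`. Since every point involved
lies in `(1/Ψ)ℤ`, only the `Ψ` residues of `k` modulo `Ψ` matter. Hoeffding's inequality for the
real and imaginary parts, with both signs, bounds each of these `4Ψ` bad events by
`exp (-log (8Ψ)) = 1/(8Ψ)`, so some choice avoids all of them.
-/

open Complex Finset MeasureTheory ProbabilityTheory Real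
open scoped NNReal

lemma measureReal_uniformOn_sum_ge_le {ι κ : Type*} [Fintype ι] [Fintype κ] [Nonempty κ]
    [MeasurableSpace κ] [DiscreteMeasurableSpace κ]
    (Y : ι → κ → ℝ) (c : ℝ≥0) (hY : ∀ i v, |Y i v| ≤ c) (hmean : ∀ i, ∑ v, Y i v = 0)
    {ε : ℝ} (hε : 0 ≤ ε) :
    (uniformOn (Set.univ : Set (ι → κ))).real {ω | ε ≤ ∑ i, Y i (ω i)}
      ≤ rexp (-ε ^ 2 / (2 * (Fintype.card ι * c ^ 2))) := by
  set μ : Measure κ := uniformOn Set.univ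
  have hpi : uniformOn (Set.univ : Set (ι → κ)) = Measure.pi fun _ ↦ μ := by
    rw [← uniformOn_pi, Set.pi_univ]
  have hsubG (i : ι) : HasSubgaussianMGF (Y i) (c ^ 2) μ := by
    have h := hasSubgaussianMGF_of_mem_Icc_of_integral_eq_zero (μ := μ)
      (a := -c) (b := c) (X := Y i) Measurable.of_discrete.aemeasurable
      (ae_of_all _ fun v ↦ abs_le.1 (hY i v))
      (by simp [μ, integral_fintype (hf := .of_finite), measureReal_def, uniformOn_univ,
        ← Finset.mul_sum, hmean])
    convert h using 2
    ext; simp [abs_of_nonneg]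
  have hsubG_eval (i : ι) :
      HasSubgaussianMGF (fun ω : ι → κ ↦ Y i (ω i)) (c ^ 2) (Measure.pi fun _ ↦ μ) := by
    rw [← (measurePreserving_eval (fun _ : ι ↦ μ) i).map_eq] at hsubG
    exact (hsubG i).of_map (measurable_pi_apply i).aemeasurable
  rw [hpi]
  simpa using HasSubgaussianMGF.measure_sum_ge_le_of_iIndepFun
    (iIndepFun_pi fun i ↦ Measurable.of_discrete.aemeasurable) (s := univ)
    (c := fun _ ↦ c ^ 2) (fun i _ ↦ hsubG_eval i) hε

lemma exists_forall_sum_lt {ι κ J : Type*} [Fintype ι] [Fintype κ] [Nonempty κ] [Fintype J]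
    (Y : J → ι → κ → ℝ) (c : ℝ≥0) (hY : ∀ j i v, |Y j i v| ≤ c)
    (hmean : ∀ j i, ∑ v, Y j i v = 0) {ε : ℝ} (hε : 0 ≤ ε)
    (hJ : Fintype.card J * rexp (-ε ^ 2 / (2 * (Fintype.card ι * c ^ 2))) < 1) :
    ∃ ω : ι → κ, ∀ j, ∑ i, Y j i (ω i) < ε := by
  let _ : MeasurableSpace κ := ⊤
  have : DiscreteMeasurableSpace κ := ⟨fun _ ↦ trivial⟩
  by_contra! hbad
  have hcover : ⋃ j, {ω : ι → κ | ε ≤ ∑ i, Y j i (ω i)} = Set.univ :=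
    Set.eq_univ_of_forall fun ω ↦ Set.mem_iUnion.2 (hbad ω)
  have : (1 : ℝ) ≤ Fintype.card J * rexp (-ε ^ 2 / (2 * (Fintype.card ι * c ^ 2))) :=
    calc (1 : ℝ) = (uniformOn Set.univ).real (⋃ j, {ω : ι → κ | ε ≤ ∑ i, Y j i (ω i)}) := by
          simp [hcover]
      _ ≤ ∑ j, (uniformOn Set.univ).real {ω : ι → κ | ε ≤ ∑ i, Y j i (ω i)} :=
          measureReal_iUnion_fintype_le _
      _ ≤ ∑ _j : J, rexp (-ε ^ 2 / (2 * (Fintype.card ι * c ^ 2))) :=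
          sum_le_sum fun j _ ↦ measureReal_uniformOn_sum_ge_le (Y j) c (hY j) (hmean j) hε
      _ = _ := by simp
  linarith

lemma Complex.norm_le_sqrt_two_mul_of_forall_re_mul_lt {z : ℂ} {ε : ℝ}
    (h : ∀ d : Fin 4, (![1, -1, I, -I] d * z).re < ε) : ‖z‖ ≤ √2 * ε := by
  have h₀ := h 0
  have h₁ := h 1
  have h₂ := h 2
  have h₃ := h 3
  simp at h₀ h₁ h₂ h₃
  refine (norm_le_sqrt_two_mul_max z).trans (mul_le_mul_of_nonneg_left ?_ (by positivity))
  exact max_le (abs_le.2 ⟨by linarith, by linarith⟩) (abs_le.2 ⟨by linarith, by linarith⟩)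

lemma exists_forall_norm_sum_le {ι κ J : Type*} [Fintype ι] [Nonempty ι] [Fintype κ]
    [Nonempty κ] [Fintype J] (Z : J → ι → κ → ℂ) {c : ℝ≥0} (hc : 0 < c)
    (hZ : ∀ j i v, ‖Z j i v‖ ≤ c) (hmean : ∀ j i, ∑ v, Z j i v = 0) {L : ℝ} (hL : 0 ≤ L)
    (hJ : 4 * Fintype.card J * rexp (-L) < 1) :
    ∃ ω : ι → κ, ∀ j, ‖∑ i, Z j i (ω i)‖ ≤ 2 * c * √(Fintype.card ι) * √L := by
  have hT : (0 : ℝ) < Fintype.card ι := by exact_mod_cast Fintype.card_pos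
  have hdir (d : Fin 4) : ‖![1, -1, I, -I] d‖ = 1 := by fin_cases d <;> simp
  set ε := c * √2 * √(Fintype.card ι) * √L
  have hexp : -ε ^ 2 / (2 * (Fintype.card ι * c ^ 2)) = -L := by
    simp only [ε, mul_pow, sq_sqrt zero_le_two, sq_sqrt hT.le, sq_sqrt hL]
    field_simp
  obtain ⟨ω, hω⟩ := exists_forall_sum_lt (J := J × Fin 4)
    (fun j i v ↦ (![1, -1, I, -I] j.2 * Z j.1 i v).re) c
    (fun j i v ↦ (abs_re_le_norm _).trans (by rw [norm_mul, hdir, one_mul]; exact hZ ..))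
    (fun j i ↦ by rw [← re_sum, ← mul_sum, hmean, mul_zero, zero_re]) (ε := ε) (by positivity)
    (by rw [hexp, Fintype.card_prod, Fintype.card_fin]; push_cast; linarith)
  refine ⟨ω, fun j ↦ ?_⟩
  calc _ ≤ √2 * ε := norm_le_sqrt_two_mul_of_forall_re_mul_lt fun d ↦ by
        simpa only [mul_sum, re_sum] using hω (j, d)
    _ = _ := by linear_combination (c * √(Fintype.card ι) * √L) * mul_self_sqrt zero_le_two

lemma Fin.sum_univ_add_mod {M : Type*} [AddCommMonoid M] {n : ℕ} [NeZero n] (f : ℕ → M)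
    (y : ℕ) : ∑ v : Fin n, f ((y + v) % n) = ∑ j : Fin n, f j :=
  Fintype.sum_bijective _ (Equiv.addLeft (Fin.ofNat n y)).bijective _ _ fun v ↦ by
    simp [Fin.val_add]

lemma Nat.injOn_add_mod (n v : ℕ) : Set.InjOn (fun y ↦ (y + v) % n) (Set.Iio n) := by
  intro y₁ h₁ y₂ h₂ h
  have h' : y₁ % n = y₂ % n := Nat.ModEq.add_right_cancel' v h
  rwa [Nat.mod_eq_of_lt h₁, Nat.mod_eq_of_lt h₂] at h'

lemma injective_natCast_div {Ψ : ℕ} (hΨ : Ψ ≠ 0) : Function.Injective fun j : ℕ ↦ (j : ℝ) / Ψ :=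
  fun j₁ j₂ h ↦ by simpa [div_left_inj' (Nat.cast_ne_zero.2 hΨ : (Ψ : ℝ) ≠ 0)] using h

namespace RandomSelection

noncomputable section

def phase (b : ℝ) (k : ℤ) : ℂ := cexp (-(2 * π * I * b * k))

def expSum (B : Finset ℝ) (k : ℤ) : ℂ := ∑ b ∈ B, phase b k

def grid (ψ Ψ : ℕ) : Finset ℝ := (range ψ).image fun j : ℕ ↦ (j : ℝ) / Ψ

def block (ψ Ψ t v : ℕ) : Finset ℝ := (range t).image fun y : ℕ ↦ (((y + v) % ψ : ℕ) : ℝ) / Ψ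

def deviation (ψ Ψ t v : ℕ) (k : ℤ) : ℂ :=
  expSum (block ψ Ψ t v) k / t - expSum (grid ψ Ψ) k / ψ

end

lemma norm_phase (b : ℝ) (k : ℤ) : ‖phase b k‖ = 1 := by
  rw [phase, show -(2 * π * I * b * k) = ((-(2 * π * b * k) : ℝ) : ℂ) * I by push_cast; ring,
    norm_exp_ofReal_mul_I]

lemma phase_div_add_mul (m : ℤ) (Ψ : ℕ) (k j : ℤ) :
    phase (m / Ψ) (k + Ψ * j) = phase (m / Ψ) k := by
  rcases eq_or_ne Ψ 0 with rfl | hΨ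
  · simp
  have : -(2 * π * I * ((m / Ψ : ℝ) : ℂ) * ((k + Ψ * j : ℤ) : ℂ))
      = -(2 * π * I * ((m / Ψ : ℝ) : ℂ) * k) + (-(m * j) : ℤ) * (2 * π * I) := by
    push_cast; field_simp; ring
  rw [phase, phase, this, Complex.exp_add, Complex.exp_int_mul_two_pi_mul_I, mul_one]

lemma phase_emod {Ψ : ℕ} {b : ℝ} (hb : ∃ m : ℤ, b = m / Ψ) (k : ℤ) :
    phase b (k % Ψ) = phase b k := by
  obtain ⟨m, rfl⟩ := hb
  conv_rhs => rw [← Int.emod_add_mul_ediv k Ψ]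
  exact (phase_div_add_mul m Ψ _ _).symm

lemma expSum_emod {Ψ : ℕ} {B : Finset ℝ} (hB : ∀ b ∈ B, ∃ m : ℤ, b = m / Ψ) (k : ℤ) :
    expSum B (k % Ψ) = expSum B k :=
  sum_congr rfl fun b hb ↦ phase_emod (hB b hb) k

lemma deviation_emod (ψ Ψ t v : ℕ) (k : ℤ) :
    deviation ψ Ψ t v (k % Ψ) = deviation ψ Ψ t v k := by
  rw [deviation, deviation, expSum_emod, expSum_emod] <;>
  · simp only [block, grid, mem_image]
    rintro _ ⟨y, -, rfl⟩
    exact ⟨_, by rw [Int.cast_natCast]⟩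

lemma norm_expSum_le (B : Finset ℝ) (k : ℤ) : ‖expSum B k‖ ≤ #B :=
  (norm_sum_le _ _).trans (by simp [norm_phase])

lemma norm_deviation_le_two (ψ Ψ t v : ℕ) (k : ℤ) : ‖deviation ψ Ψ t v k‖ ≤ 2 := by
  have h (B : Finset ℝ) (n : ℕ) (hB : #B ≤ n) : ‖expSum B k / n‖ ≤ 1 := by
    rw [norm_div, Complex.norm_natCast]
    exact div_le_one_of_le₀ ((norm_expSum_le B k).trans (by exact_mod_cast hB)) n.cast_nonneg
  calc ‖deviation ψ Ψ t v k‖ ≤ 1 + 1 := (norm_sub_le _ _).trans <| add_le_add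
        (h _ _ (card_image_le.trans (card_range t).le))
        (h _ _ (card_image_le.trans (card_range ψ).le))
    _ = 2 := by norm_num

lemma expSum_grid {ψ Ψ : ℕ} (hΨ : Ψ ≠ 0) (k : ℤ) :
    expSum (grid ψ Ψ) k = ∑ j : Fin ψ, phase ((j : ℕ) / Ψ) k := by
  rw [expSum, grid, sum_image fun _ _ _ _ h ↦ injective_natCast_div hΨ h,
    Fin.sum_univ_eq_sum_range (fun j ↦ phase ((j : ℕ) / Ψ) k)]

lemma expSum_block {ψ Ψ t : ℕ} (hΨ : Ψ ≠ 0) (htψ : t ≤ ψ) (v : ℕ) (k : ℤ) :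
    expSum (block ψ Ψ t v) k = ∑ y ∈ range t, phase (((y + v) % ψ : ℕ) / Ψ) k := by
  refine sum_image fun y₁ h₁ y₂ h₂ h ↦ Nat.injOn_add_mod ψ v ?_ ?_ (injective_natCast_div hΨ h)
  · exact lt_of_lt_of_le (mem_range.1 h₁) htψ
  · exact lt_of_lt_of_le (mem_range.1 h₂) htψ

lemma sum_expSum_block {ψ Ψ t : ℕ} [NeZero ψ] (hΨ : Ψ ≠ 0) (htψ : t ≤ ψ) (k : ℤ) :
    ∑ v : Fin ψ, expSum (block ψ Ψ t v) k = t * expSum (grid ψ Ψ) k := by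
  simp_rw [expSum_block hΨ htψ, expSum_grid hΨ]
  rw [sum_comm]
  simp [Fin.sum_univ_add_mod (fun j ↦ phase ((j : ℕ) / Ψ) k)]

lemma sum_deviation_eq_zero {ψ Ψ t : ℕ} [NeZero ψ] (hΨ : Ψ ≠ 0) (ht : t ≠ 0) (htψ : t ≤ ψ)
    (k : ℤ) : ∑ v : Fin ψ, deviation ψ Ψ t v k = 0 := by
  have ht' : (t : ℂ) ≠ 0 := Nat.cast_ne_zero.2 ht
  have hψ' : (ψ : ℂ) ≠ 0 := Nat.cast_ne_zero.2 (NeZero.ne ψ)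
  simp only [deviation, sum_sub_distrib, ← sum_div, sum_expSum_block hΨ htψ, sum_const,
    card_univ, Fintype.card_fin, nsmul_eq_mul]
  field_simp
  ring

end RandomSelection

open RandomSelection

theorem random_selection_exponential_sum_bound_general
    (ψ Ψ t : ℕ) (hΨ : 1 ≤ Ψ) (ht1 : 1 ≤ t) (htψ : t ≤ ψ)
    (A : Finset ℝ) (hA : ∀ a ∈ A, ∃ m : ℤ, a = (m : ℝ) / (Ψ : ℝ))
    (hT : 1 ≤ A.card) :
    ∃ x : ℝ → ℕ, (∀ a ∈ A, x a < ψ) ∧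
      ∀ k : ℤ,
        ‖∑ a ∈ A,
            ((∑ b ∈ (Finset.range t).image (fun y : ℕ => ((((y + x a) % ψ : ℕ) : ℝ) / (Ψ : ℝ))),
                Complex.exp (-(2 * (Real.pi : ℂ) * Complex.I * (b : ℂ) * (k : ℂ)))) / (t : ℂ) -
              (∑ b ∈ (Finset.range ψ).image (fun j : ℕ => ((j : ℝ) / (Ψ : ℝ))),
                Complex.exp (-(2 * (Real.pi : ℂ) * Complex.I * (b : ℂ) * (k : ℂ)))) / (ψ : ℂ)) *
            Complex.exp (-(2 * (Real.pi : ℂ) * Complex.I * (a : ℂ) * (k : ℂ)))‖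
          ≤ 4 * Real.sqrt (A.card : ℝ) * Real.sqrt (Real.log (8 * (Ψ : ℝ))) := by
  have : NeZero ψ := ⟨by omega⟩
  have : Nonempty A := (card_pos.1 hT).coe_sort
  have h8Ψ : (0 : ℝ) < 8 * Ψ := by positivity
  obtain ⟨ω, hω⟩ := exists_forall_norm_sum_le (ι := A) (κ := Fin ψ) (J := Fin Ψ)
    (fun r a v ↦ deviation ψ Ψ t v r * phase a r) two_pos
    (fun r a v ↦ by simpa [norm_phase] using norm_deviation_le_two ψ Ψ t v r)
    (fun r a ↦ by rw [← sum_mul, sum_deviation_eq_zero (by omega) (by omega) htψ, zero_mul])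
    (L := log (8 * Ψ)) (log_nonneg (by norm_cast; omega))
    (by
      rw [Real.exp_neg, exp_log h8Ψ, Fintype.card_fin, ← div_eq_mul_inv, div_lt_one h8Ψ]
      linarith)
  refine ⟨fun a ↦ if h : a ∈ A then ω ⟨a, h⟩ else 0, fun a ha ↦ by simp [ha], fun k ↦ ?_⟩
  obtain ⟨r, hr⟩ : ∃ r : Fin Ψ, ((r : ℕ) : ℤ) = k % Ψ := by
    have h₀ := Int.emod_nonneg k (by omega : (Ψ : ℤ) ≠ 0)
    have h₁ := Int.emod_lt_of_pos k (by omega : (0 : ℤ) < Ψ)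
    exact ⟨⟨(k % Ψ).toNat, by omega⟩, Int.toNat_of_nonneg h₀⟩
  change ‖∑ a ∈ A, deviation ψ Ψ t _ k * phase a k‖ ≤ _
  rw [← sum_coe_sort A]
  calc _ = ‖∑ a : A, deviation ψ Ψ t (ω a) r * phase a r‖ := by
        refine congrArg _ (sum_congr rfl fun a _ ↦ ?_)
        rw [hr, deviation_emod, phase_emod (hA a a.2), dif_pos a.2]
    _ ≤ _ := (hω r).trans_eq (by rw [Fintype.card_coe]; push_cast; ring)

/-- **Random selection step.** Given integers `ψ ≥ 2`, `Ψ ≥ 1`, `1 ≤ t ≤ ψ`, the translated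
blocks `B_x = {((y+x) mod ψ)/Ψ : 0 ≤ y < t}` for `x ∈ {0,…,ψ-1}`, and a finite set
`A ⊆ (1/Ψ)ℤ` with `T = #A` satisfying `4 log(8Ψ) ≤ T`, there is a choice `x : A → {0,…,ψ-1}`
such that for all `k ∈ ℤ`,
`|∑_{a ∈ A} (S_{B_{x(a)}}(k)/t - S_P(k)/ψ) e^{-2πiak}| ≤ 4 √T √(log(8Ψ))`,
where `P = {0, 1/Ψ, …, (ψ-1)/Ψ}` and `S_B(k) = ∑_{b ∈ B} e^{-2πibk}`. -/
theorem random_selection_exponential_sum_bound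
    (ψ Ψ t : ℕ) (hψ : 2 ≤ ψ) (hΨ : 1 ≤ Ψ) (ht1 : 1 ≤ t) (htψ : t ≤ ψ)
    (A : Finset ℝ) (hA : ∀ a ∈ A, ∃ m : ℤ, a = (m : ℝ) / (Ψ : ℝ))
    (hT : 1 ≤ A.card)
    (hlog : 4 * Real.log (8 * (Ψ : ℝ)) ≤ (A.card : ℝ)) :
    ∃ x : ℝ → ℕ, (∀ a ∈ A, x a < ψ) ∧
      ∀ k : ℤ,
        ‖∑ a ∈ A,
            ((∑ b ∈ (Finset.range t).image (fun y : ℕ => ((((y + x a) % ψ : ℕ) : ℝ) / (Ψ : ℝ))),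
                Complex.exp (-(2 * (Real.pi : ℂ) * Complex.I * (b : ℂ) * (k : ℂ)))) / (t : ℂ) -
              (∑ b ∈ (Finset.range ψ).image (fun j : ℕ => ((j : ℝ) / (Ψ : ℝ))),
                Complex.exp (-(2 * (Real.pi : ℂ) * Complex.I * (b : ℂ) * (k : ℂ)))) / (ψ : ℂ)) *
            Complex.exp (-(2 * (Real.pi : ℂ) * Complex.I * (a : ℂ) * (k : ℂ)))‖
          ≤ 4 * Real.sqrt (A.card : ℝ) * Real.sqrt (Real.log (8 * (Ψ : ℝ))) :=
  random_selection_exponential_sum_bound_general ψ Ψ t hΨ ht1 htψ A hA hT
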